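/- If the branch lengths of two scenarios satisfy λ²_a ∈ [(1−δ)λ¹_a, (1+δ)λ¹_a] for all arcs a (same tree and same probabilities), then for every subset S ⊆ T, |f¹(S) − f²(S)| ≤ δ · f¹(T) = δ · Σ_a λ¹_a, where f^ω(S) uses branch lengths λ^ω; consequently the ePD loss from protecting the set optimal for the wrong branch-length scenario is at most 2δ Σ_a λ¹_a. -/

import Mathlib

/-!
Arc by arc, the two scenarios differ by `λ¹_a - λ²_a` times the probability `1 - ∏ p_i` that
the arc survives, which lies in `[0, 1]`; the relative bound `|λ¹_a - λ²_a| ≤ δ λ¹_a` therefore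
sums to `|f¹(S) - f²(S)| ≤ δ Σ_a λ¹_a`. For the loss, `S*²` beats `S*¹` under `f²`, and passing
from `f¹` to `f²` and back costs this uniform error twice.
-/

open Finset

lemma abs_sub_le_of_mul_le_of_le_mul {x y δ : ℝ}
    (hlow : (1 - δ) * x ≤ y) (hhigh : y ≤ (1 + δ) * x) : |x - y| ≤ δ * x :=
  abs_le.mpr ⟨by linarith, by linarith⟩

lemma one_sub_prod_mem_Icc {ι : Type*} (s : Finset ι) {p : ι → ℝ}
    (hp : ∀ i ∈ s, 0 ≤ p i ∧ p i ≤ 1) : 1 - ∏ i ∈ s, p i ∈ Set.Icc (0 : ℝ) 1 := by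
  have hprod_nonneg : 0 ≤ ∏ i ∈ s, p i := prod_nonneg fun i hi => (hp i hi).1
  have hprod_le_one : ∏ i ∈ s, p i ≤ 1 :=
    prod_le_one (fun i hi => (hp i hi).1) (fun i hi => (hp i hi).2)
  exact ⟨by linarith, by linarith⟩

lemma abs_sum_mul_sub_sum_mul_le {ι : Type*} (s : Finset ι) {w₁ w₂ c ε : ι → ℝ}
    (hw : ∀ i ∈ s, |w₁ i - w₂ i| ≤ ε i) (hc : ∀ i ∈ s, |c i| ≤ 1) :
    |∑ i ∈ s, w₁ i * c i - ∑ i ∈ s, w₂ i * c i| ≤ ∑ i ∈ s, ε i := by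
  rw [← sum_sub_distrib]
  refine (abs_sum_le_sum_abs _ _).trans (sum_le_sum fun i hi => ?_)
  calc |w₁ i * c i - w₂ i * c i| = |w₁ i - w₂ i| * |c i| := by rw [← sub_mul, abs_mul]
    _ ≤ |w₁ i - w₂ i| := mul_le_of_le_one_right (abs_nonneg _) (hc i hi)
    _ ≤ ε i := hw i hi

lemma sub_le_two_mul_of_abs_sub_le {α : Type*} {f₁ f₂ : α → ℝ} {ε : ℝ}
    (hclose : ∀ x, |f₁ x - f₂ x| ≤ ε) {x y : α} (hxy : f₂ x ≤ f₂ y) :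
    f₁ x - f₁ y ≤ 2 * ε := by
  have hx := abs_le.mp (hclose x)
  have hy := abs_le.mp (hclose y)
  linarith [hx.2, hy.1]

noncomputable def expectedPD {A T : Type*} [Fintype A] [DecidableEq T]
    (lam : A → ℝ) (L : A → Finset T) (p : T → ℝ) (S : Finset T) : ℝ :=
  ∑ a : A, lam a * (1 - ∏ i ∈ L a \ S, p i)

lemma abs_expectedPD_sub_le {A T : Type*} [Fintype A] [DecidableEq T]
    {lam₁ lam₂ : A → ℝ} {δ : ℝ}
    (hlam₂ : ∀ a, (1 - δ) * lam₁ a ≤ lam₂ a ∧ lam₂ a ≤ (1 + δ) * lam₁ a)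
    (L : A → Finset T) {p : T → ℝ} (hp : ∀ i, 0 ≤ p i ∧ p i ≤ 1) (S : Finset T) :
    |expectedPD lam₁ L p S - expectedPD lam₂ L p S| ≤ δ * ∑ a : A, lam₁ a := by
  rw [mul_sum]
  refine abs_sum_mul_sub_sum_mul_le _
    (fun a _ => abs_sub_le_of_mul_le_of_le_mul (hlam₂ a).1 (hlam₂ a).2) fun a _ => ?_
  obtain ⟨hnonneg, hle⟩ := one_sub_prod_mem_Icc (L a \ S) fun i _ => hp i
  rwa [abs_of_nonneg hnonneg]

theorem branch_length_perturbation_general {A T : Type} [Fintype A] [DecidableEq T]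
    (lam₁ lam₂ : A → ℝ) (L : A → Finset T) (p : T → ℝ) (δ : ℝ)
    (hlam₂ : ∀ a, (1 - δ) * lam₁ a ≤ lam₂ a ∧ lam₂ a ≤ (1 + δ) * lam₁ a)
    (hp : ∀ i, 0 ≤ p i ∧ p i ≤ 1)
    (f₁ f₂ : Finset T → ℝ)
    (hf₁ : ∀ S, f₁ S = ∑ a : A, lam₁ a * (1 - ∏ i ∈ L a \ S, p i))
    (hf₂ : ∀ S, f₂ S = ∑ a : A, lam₂ a * (1 - ∏ i ∈ L a \ S, p i))
    (k : ℕ) (S₁ S₂ : Finset T)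
    (hS₁card : S₁.card ≤ k)
    (hS₂opt : ∀ S : Finset T, S.card ≤ k → f₂ S ≤ f₂ S₂) :
    (∀ S : Finset T, |f₁ S - f₂ S| ≤ δ * ∑ a : A, lam₁ a) ∧
      f₁ S₁ - f₁ S₂ ≤ 2 * δ * ∑ a : A, lam₁ a := by
  obtain rfl : f₁ = expectedPD lam₁ L p := funext hf₁
  obtain rfl : f₂ = expectedPD lam₂ L p := funext hf₂
  have hclose := abs_expectedPD_sub_le hlam₂ L hp
  refine ⟨hclose, ?_⟩
  rw [mul_assoc]
  exact sub_le_two_mul_of_abs_sub_le hclose (hS₂opt S₁ hS₁card)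

/-- Stability of the protected ePD under a relative δ-perturbation of the branch
lengths, and the resulting bound on the loss from using the wrong scenario's
optimal set. -/
theorem branch_length_perturbation {A T : Type} [Fintype A] [DecidableEq T]
    (lam₁ lam₂ : A → ℝ) (L : A → Finset T) (p : T → ℝ) (δ : ℝ)
    (hδ0 : 0 ≤ δ) (hδ1 : δ ≤ 1)
    (hlam₁ : ∀ a, 0 ≤ lam₁ a)
    (hlam₂ : ∀ a, (1 - δ) * lam₁ a ≤ lam₂ a ∧ lam₂ a ≤ (1 + δ) * lam₁ a)
    (hL : ∀ a, (L a).Nonempty)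
    (hp : ∀ i, 0 ≤ p i ∧ p i ≤ 1)
    (f₁ f₂ : Finset T → ℝ)
    (hf₁ : ∀ S, f₁ S = ∑ a : A, lam₁ a * (1 - ∏ i ∈ L a \ S, p i))
    (hf₂ : ∀ S, f₂ S = ∑ a : A, lam₂ a * (1 - ∏ i ∈ L a \ S, p i))
    (k : ℕ) (S₁ S₂ : Finset T)
    (hS₁card : S₁.card ≤ k) (hS₂card : S₂.card ≤ k)
    (hS₁opt : ∀ S : Finset T, S.card ≤ k → f₁ S ≤ f₁ S₁)
    (hS₂opt : ∀ S : Finset T, S.card ≤ k → f₂ S ≤ f₂ S₂) :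
    (∀ S : Finset T, |f₁ S - f₂ S| ≤ δ * ∑ a : A, lam₁ a) ∧
      f₁ S₁ - f₁ S₂ ≤ 2 * δ * ∑ a : A, lam₁ a :=
  branch_length_perturbation_general lam₁ lam₂ L p δ hlam₂ hp f₁ f₂ hf₁ hf₂ k S₁ S₂ hS₁card hS₂opt
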